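/- Fix γ ∈ [0, π/2), g₀ > 0, T > 0, m_e > 0, u_max > 0 and t_f > 0. Let r : [0,t_f] → ℝ³ be continuously differentiable with derivative v, let v be absolutely continuous with v'(t) = (T/m(t))·‖u(t)‖·d(t) − g₀·e_z for almost every t, where m and u are measurable with m(t) ≥ m_e and ‖u(t)‖ ≤ u_max for all t, and d : [0,t_f] → ℝ³ is continuous with ‖d(t)‖ = 1 for all t. Assume h(r(t)) ≥ 0 for all t ∈ [0,t_f]. If t₀ ∈ (0, t_f) satisfies h(r(t₀)) = 0 and r̄(t₀) ≠ 0, then ⟨n(r(t₀)), d(t₀)⟩ ≥ m_e·g₀/(T·u_max) > 0. -/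

import Mathlib

open RealInnerProductSpace

/-- The projection of `r ∈ ℝ³` onto its first two coordinates. -/
noncomputable def bar (r : EuclideanSpace ℝ (Fin 3)) : EuclideanSpace ℝ (Fin 2) := WithLp.toLp 2 (![r 0, r 1] : Fin 2 → ℝ)

/-- For `δ ∈ ℝ²` and `c ∈ ℝ`, the vector `(δ₁, δ₂, c) ∈ ℝ³`. -/
noncomputable def withZ (δ : EuclideanSpace ℝ (Fin 2)) (c : ℝ) : EuclideanSpace ℝ (Fin 3) :=
  WithLp.toLp 2 (![δ 0, δ 1, c] : Fin 3 → ℝ)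

/-- The vertical unit vector `e_z = (0,0,1)`. -/
noncomputable def ez : EuclideanSpace ℝ (Fin 3) := WithLp.toLp 2 (![0, 0, 1] : Fin 3 → ℝ)

/-- The glide-slope function `h(r) = r_z − tan γ ‖r̄‖`. -/
noncomputable def gs (γ : ℝ) (r : EuclideanSpace ℝ (Fin 3)) : ℝ :=
  r 2 - Real.tan γ * ‖bar r‖

/-- The gradient `n(r) = (−tan γ · r̄/‖r̄‖, 1)` of the glide-slope function (for `r̄ ≠ 0`). -/
noncomputable def gsGrad (γ : ℝ) (r : EuclideanSpace ℝ (Fin 3)) : EuclideanSpace ℝ (Fin 3) :=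
  withZ ((-Real.tan γ) • (‖bar r‖⁻¹ • bar r)) 1


lemma inner_gsGrad (γ : ℝ) (r₀ w : EuclideanSpace ℝ (Fin 3)) :
    ⟪gsGrad γ r₀, w⟫ = (-Real.tan γ * ‖bar r₀‖⁻¹) * (r₀ 0 * w 0 + r₀ 1 * w 1) + w 2 := by
  simp [gsGrad, withZ, bar, PiLp.inner_apply, Fin.sum_univ_three, RCLike.inner_apply,
    conj_trivial]
  ring

lemma inner_gsGrad_ez (γ : ℝ) (r₀ : EuclideanSpace ℝ (Fin 3)) :
    ⟪gsGrad γ r₀, ez⟫ = 1 := by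
  rw [inner_gsGrad]
  norm_num [ez]
  rfl

lemma inner_bar (x y : EuclideanSpace ℝ (Fin 3)) :
    ⟪bar x, bar y⟫ = x 0 * y 0 + x 1 * y 1 := by
  simp [bar, PiLp.inner_apply, Fin.sum_univ_two, RCLike.inner_apply, conj_trivial]
  ring

lemma gs_concave {γ : ℝ} (htan : 0 ≤ Real.tan γ) (r₀ w : EuclideanSpace ℝ (Fin 3))
    (hne : bar r₀ ≠ 0) :
    gs γ w ≤ gs γ r₀ + ⟪gsGrad γ r₀, w⟫ - ⟪gsGrad γ r₀, r₀⟫ := by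
  have hn : 0 < ‖bar r₀‖ := norm_pos_iff.2 hne
  have hsq : r₀ 0 * r₀ 0 + r₀ 1 * r₀ 1 = ‖bar r₀‖ ^ 2 := by
    rw [← inner_bar, real_inner_self_eq_norm_sq]
  have hcs : r₀ 0 * w 0 + r₀ 1 * w 1 ≤ ‖bar r₀‖ * ‖bar w‖ := by
    rw [← inner_bar]; exact real_inner_le_norm _ _
  rw [inner_gsGrad, inner_gsGrad, gs, gs]
  have key : Real.tan γ * (‖bar r₀‖⁻¹ * (r₀ 0 * w 0 + r₀ 1 * w 1)) ≤ Real.tan γ * ‖bar w‖ := by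
    apply mul_le_mul_of_nonneg_left _ htan
    rw [inv_mul_le_iff₀ hn]
    nlinarith [hcs]
  have h2 : (-Real.tan γ * ‖bar r₀‖⁻¹) * (r₀ 0 * r₀ 0 + r₀ 1 * r₀ 1) = -(Real.tan γ * ‖bar r₀‖) := by
    rw [hsq]; field_simp
  nlinarith [key, h2]

set_option maxHeartbeats 1000000 in
/-- At an interior contact point `t₀` with the glide-slope constraint, the control direction
satisfies `⟨n(r(t₀)), d(t₀)⟩ ≥ m_e g₀ / (T u_max) > 0`. -/
theorem stmt7 (γ g₀ T m_e u_max t_f : ℝ)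
    (hγ0 : 0 ≤ γ) (hγ1 : γ < Real.pi / 2)
    (hg₀ : 0 < g₀) (hT : 0 < T) (hme : 0 < m_e) (humax : 0 < u_max) (htf : 0 < t_f)
    (r v d : ℝ → EuclideanSpace ℝ (Fin 3)) (m : ℝ → ℝ) (u : ℝ → EuclideanSpace ℝ (Fin 3))
    -- r is continuously differentiable with derivative v
    (hr : ∀ t ∈ Set.Icc (0:ℝ) t_f, HasDerivAt r (v t) t)
    (hv_cont : ContinuousOn v (Set.Icc (0:ℝ) t_f))
    -- m and u are measurable with m ≥ m_e and ‖u‖ ≤ u_max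
    (hm_meas : Measurable m) (hu_meas : Measurable u)
    (hm : ∀ t ∈ Set.Icc (0:ℝ) t_f, m_e ≤ m t)
    (hu : ∀ t ∈ Set.Icc (0:ℝ) t_f, ‖u t‖ ≤ u_max)
    -- v is absolutely continuous with v'(t) = (T/m(t))‖u(t)‖ d(t) − g₀ e_z a.e.
    (hv : ∀ t ∈ Set.Icc (0:ℝ) t_f,
      v t = v 0 + ∫ s in (0:ℝ)..t, ((T / m s * ‖u s‖) • d s - g₀ • ez))
    -- d is continuous with unit norm
    (hd_cont : ContinuousOn d (Set.Icc (0:ℝ) t_f))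
    (hd : ∀ t ∈ Set.Icc (0:ℝ) t_f, ‖d t‖ = 1)
    -- the state constraint h(r(t)) ≥ 0 holds on [0, t_f]
    (hstate : ∀ t ∈ Set.Icc (0:ℝ) t_f, 0 ≤ gs γ (r t))
    -- t₀ is an interior contact point with r̄(t₀) ≠ 0
    (t₀ : ℝ) (ht₀ : t₀ ∈ Set.Ioo (0:ℝ) t_f)
    (hcontact : gs γ (r t₀) = 0) (hrbar : bar (r t₀) ≠ 0) :
    ⟪gsGrad γ (r t₀), d t₀⟫ ≥ m_e * g₀ / (T * u_max) ∧
    0 < m_e * g₀ / (T * u_max) := by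
  have hK : 0 < m_e * g₀ / (T * u_max) := by positivity
  refine ⟨?_, hK⟩
  by_contra hlt
  push_neg at hlt
  set K := m_e * g₀ / (T * u_max) with hKdef
  have htan : 0 ≤ Real.tan γ := Real.tan_nonneg_of_nonneg_of_le_pi_div_two hγ0 hγ1.le
  set n₀ := gsGrad γ (r t₀) with hn₀
  set A : ℝ → EuclideanSpace ℝ (Fin 3) :=
    fun s => (T / m s * ‖u s‖) • d s - g₀ • ez with hA
  set F : ℝ → ℝ := fun s => ⟪n₀, A s⟫ with hF
  have ht₀mem : t₀ ∈ Set.Icc (0:ℝ) t_f := ⟨ht₀.1.le, ht₀.2.le⟩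
  have h0mem : (0:ℝ) ∈ Set.Icc (0:ℝ) t_f := ⟨le_refl _, htf.le⟩
  have hez_norm : ‖ez‖ = 1 := by
    have : ⟪ez, ez⟫ = 1 := by
      rw [PiLp.inner_apply]
      simp [ez, PiLp.inner_apply, Fin.sum_univ_three, RCLike.inner_apply, conj_trivial]
    have h2 := real_inner_self_eq_norm_sq ez
    nlinarith [norm_nonneg ez]
  -- coefficient bounds
  have hcoef : ∀ s ∈ Set.Icc (0:ℝ) t_f,
      0 ≤ T / m s * ‖u s‖ ∧ T / m s * ‖u s‖ ≤ T / m_e * u_max := by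
    intro s hs
    have hms : m_e ≤ m s := hm s hs
    have hms0 : 0 < m s := lt_of_lt_of_le hme hms
    constructor
    · positivity
    · apply mul_le_mul
      · exact div_le_div_of_nonneg_left hT.le hme hms
      · exact hu s hs
      · exact norm_nonneg _
      · positivity
  -- F pointwise formula
  have hF_eq : ∀ s, F s = (T / m s * ‖u s‖) * ⟪n₀, d s⟫ - g₀ := by
    intro s
    simp only [hF, hA, inner_sub_right, real_inner_smul_right, hn₀, inner_gsGrad_ez]
    ring
  -- Integrability of A on [0, t_f]
  have hd_aem : AEMeasurable d (MeasureTheory.volume.restrict (Set.Icc (0:ℝ) t_f)) :=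
    hd_cont.aemeasurable measurableSet_Icc
  have hcoef_meas : Measurable fun s => T / m s * ‖u s‖ :=
    (measurable_const.div hm_meas).mul hu_meas.norm
  have hA_aesm : MeasureTheory.AEStronglyMeasurable A
      (MeasureTheory.volume.restrict (Set.Icc (0:ℝ) t_f)) := by
    exact ((hcoef_meas.aemeasurable.smul hd_aem).sub aemeasurable_const).aestronglyMeasurable
  have hA_bdd : ∀ s ∈ Set.Icc (0:ℝ) t_f, ‖A s‖ ≤ T / m_e * u_max + g₀ := by
    intro s hs
    have h1 : ‖A s‖ ≤ ‖(T / m s * ‖u s‖) • d s‖ + ‖g₀ • ez‖ := norm_sub_le _ _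
    have h2 : ‖(T / m s * ‖u s‖) • d s‖ = (T / m s * ‖u s‖) * 1 := by
      rw [norm_smul, Real.norm_eq_abs, abs_of_nonneg (hcoef s hs).1, hd s hs]
    have h3 : ‖g₀ • ez‖ = g₀ := by
      rw [norm_smul, Real.norm_eq_abs, abs_of_nonneg hg₀.le, hez_norm, mul_one]
    have := (hcoef s hs).2
    rw [h2, h3] at h1; linarith
  have hA_int : MeasureTheory.IntegrableOn A (Set.Icc (0:ℝ) t_f) := by
    refine ⟨hA_aesm, MeasureTheory.HasFiniteIntegral.of_bounded
      (C := T / m_e * u_max + g₀) ?_⟩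
    rw [MeasureTheory.ae_restrict_iff' measurableSet_Icc]
    exact MeasureTheory.ae_of_all _ hA_bdd
  have hsubIcc : ∀ a b : ℝ, a ∈ Set.Icc (0:ℝ) t_f → b ∈ Set.Icc (0:ℝ) t_f →
      Set.uIoc a b ⊆ Set.Icc (0:ℝ) t_f := by
    intro a b ha hb
    refine Set.Ioc_subset_Icc_self.trans (Set.Icc_subset_Icc ?_ ?_)
    · exact le_min ha.1 hb.1
    · exact max_le ha.2 hb.2
  have hA_ii : ∀ a b : ℝ, a ∈ Set.Icc (0:ℝ) t_f → b ∈ Set.Icc (0:ℝ) t_f →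
      IntervalIntegrable A MeasureTheory.volume a b := by
    intro a b ha hb
    rw [intervalIntegrable_iff]
    exact hA_int.mono_set (hsubIcc a b ha hb)
  have hF_ii : ∀ a b : ℝ, a ∈ Set.Icc (0:ℝ) t_f → b ∈ Set.Icc (0:ℝ) t_f →
      IntervalIntegrable F MeasureTheory.volume a b := by
    intro a b ha hb
    rw [intervalIntegrable_iff]
    have := (innerSL ℝ n₀).integrable_comp ((intervalIntegrable_iff).1 (hA_ii a b ha hb))
    exact this
  -- ψ formula
  have hψ_eq : ∀ t ∈ Set.Icc (0:ℝ) t_f,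
      ⟪n₀, v t⟫ = ⟪n₀, v 0⟫ + ∫ s in (0:ℝ)..t, F s := by
    intro t ht
    rw [hv t ht, inner_add_right]
    congr 1
    have := ((innerSL ℝ n₀).intervalIntegral_comp_comm (hA_ii 0 t h0mem ht)).symm
    simpa [hF, hA] using this
  -- derivative of g t = ⟪n₀, r t⟫
  have hg_deriv : ∀ t ∈ Set.Icc (0:ℝ) t_f,
      HasDerivAt (fun τ => ⟪n₀, r τ⟫) (⟪n₀, v t⟫) t := by
    intro t ht
    have := ((innerSL ℝ n₀).hasFDerivAt (x := r t)).comp_hasDerivAt t (hr t ht)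
    exact this
  -- global lower bound from concavity
  have h_glb : ∀ t ∈ Set.Icc (0:ℝ) t_f, ⟪n₀, r t₀⟫ ≤ ⟪n₀, r t⟫ := by
    intro t ht
    have h1 := gs_concave htan (r t₀) (r t) hrbar
    have h2 := hstate t ht
    rw [hcontact] at h1
    rw [hn₀]; linarith
  have hIccnhds : Set.Icc (0:ℝ) t_f ∈ nhds t₀ := Icc_mem_nhds ht₀.1 ht₀.2
  have hmin : IsLocalMin (fun τ => ⟪n₀, r τ⟫) t₀ :=
    Filter.eventually_of_mem hIccnhds fun t ht => h_glb t ht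
  have hψ0 : ⟪n₀, v t₀⟫ = 0 := hmin.hasDerivAt_eq_zero (hg_deriv t₀ ht₀mem)
  -- choose δ from continuity of β = ⟪n₀, d ·⟫
  set c' : ℝ := (⟪n₀, d t₀⟫ + K) / 2 with hc'
  have hc'1 : ⟪n₀, d t₀⟫ < c' := by rw [hc']; linarith
  have hc'2 : c' < K := by rw [hc']; linarith
  have hβ_cont : ContinuousOn (fun s => ⟪n₀, d s⟫) (Set.Icc (0:ℝ) t_f) :=
    (innerSL ℝ n₀).continuous.comp_continuousOn hd_cont
  have hβt : Filter.Tendsto (fun s => ⟪n₀, d s⟫) (nhds t₀) (nhds ⟪n₀, d t₀⟫) := by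
    have h1 := hβ_cont t₀ ht₀mem
    rwa [ContinuousWithinAt, nhdsWithin_eq_nhds.2 hIccnhds] at h1
  have h_ev : ∀ᶠ s in nhds t₀, ⟪n₀, d s⟫ < c' := hβt (Iio_mem_nhds hc'1)
  obtain ⟨δ, hδ, hball⟩ := Metric.eventually_nhds_iff.1 h_ev
  -- the left endpoint t₁
  set t₁ : ℝ := max (t₀ - δ / 2) 0 with ht₁def
  have ht₁0 : 0 ≤ t₁ := le_max_right _ _
  have ht₁lt : t₁ < t₀ := max_lt (by linarith) ht₀.1
  have ht₁mem : t₁ ∈ Set.Icc (0:ℝ) t_f := ⟨ht₁0, le_trans ht₁lt.le ht₀.2.le⟩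
  have hsub : Set.Icc t₁ t₀ ⊆ Set.Icc (0:ℝ) t_f :=
    Set.Icc_subset_Icc ht₁0 ht₀.2.le
  have hdist : ∀ s ∈ Set.Icc t₁ t₀, dist s t₀ < δ := by
    intro s hs
    have h1 : t₀ - δ / 2 ≤ t₁ := le_max_left _ _
    rw [Real.dist_eq, abs_lt]
    constructor <;> [linarith [hs.1]; linarith [hs.2]]
  -- the bound M
  set M : ℝ := max 0 (T * u_max / m_e * c') with hM
  have hMlt : M < g₀ := by
    rcases le_or_gt c' 0 with h | h
    · have : T * u_max / m_e * c' ≤ 0 := by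
        apply mul_nonpos_of_nonneg_of_nonpos (by positivity) h
      rw [hM, max_eq_left this]; exact hg₀
    · apply max_lt hg₀
      have hKg : T * u_max / m_e * K = g₀ := by
        rw [hKdef]; field_simp
      calc T * u_max / m_e * c' < T * u_max / m_e * K := by
            apply mul_lt_mul_of_pos_left hc'2 (by positivity)
        _ = g₀ := hKg
  -- F is bounded above on [t₁, t₀]
  have hFbound : ∀ s ∈ Set.Icc t₁ t₀, F s ≤ M - g₀ := by
    intro s hs
    have hsI : s ∈ Set.Icc (0:ℝ) t_f := hsub hs
    have hβs : ⟪n₀, d s⟫ < c' := hball (hdist s hs)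
    have hc := hcoef s hsI
    have hmul : T / m s * ‖u s‖ * ⟪n₀, d s⟫ ≤ M := by
      rcases le_or_gt (⟪n₀, d s⟫) 0 with hb | hb
      · exact le_trans (mul_nonpos_of_nonneg_of_nonpos hc.1 hb) (le_max_left _ _)
      · have h1 : T / m s * ‖u s‖ * ⟪n₀, d s⟫ ≤ T / m_e * u_max * c' := by
          apply mul_le_mul hc.2 hβs.le hb.le (by positivity)
        have h2 : T / m_e * u_max * c' = T * u_max / m_e * c' := by ring
        rw [h2] at h1
        exact le_trans h1 (le_max_right _ _)
    rw [hF_eq s]; linarith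
  -- lower bound for ψ on [t₁, t₀]
  have hψ_lb : ∀ s ∈ Set.Icc t₁ t₀, (g₀ - M) * (t₀ - s) ≤ ⟪n₀, v s⟫ := by
    intro s hs
    have hsI : s ∈ Set.Icc (0:ℝ) t_f := hsub hs
    have e1 := hψ_eq s hsI
    have e2 := hψ_eq t₀ ht₀mem
    have hadj := intervalIntegral.integral_add_adjacent_intervals
      (hF_ii 0 s h0mem hsI) (hF_ii s t₀ hsI ht₀mem)
    have hintle : (∫ σ in s..t₀, F σ) ≤ ∫ σ in s..t₀, (M - g₀) := by
      apply intervalIntegral.integral_mono_on hs.2 (hF_ii s t₀ hsI ht₀mem)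
        intervalIntegrable_const
      intro x hx
      exact hFbound x ⟨le_trans hs.1 hx.1, hx.2⟩
    rw [intervalIntegral.integral_const, smul_eq_mul] at hintle
    have := hψ0
    rw [e2] at this
    rw [e1]
    nlinarith [hintle]
  -- ψ is positive on (t₁, t₀)
  have hψ_pos : ∀ s ∈ Set.Ioo t₁ t₀, 0 < ⟪n₀, v s⟫ := by
    intro s hs
    have h1 := hψ_lb s ⟨hs.1.le, hs.2.le⟩
    have h2 : 0 < (g₀ - M) * (t₀ - s) := mul_pos (by linarith) (by linarith [hs.2])
    linarith
  -- integrate ψ over [t₁, t₀]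
  have huIcc : Set.uIcc t₁ t₀ = Set.Icc t₁ t₀ := Set.uIcc_of_le ht₁lt.le
  have hψ_cont : ContinuousOn (fun s => ⟪n₀, v s⟫) (Set.Icc (0:ℝ) t_f) :=
    (innerSL ℝ n₀).continuous.comp_continuousOn hv_cont
  have hψ_ii : IntervalIntegrable (fun s => ⟪n₀, v s⟫) MeasureTheory.volume t₁ t₀ := by
    apply ContinuousOn.intervalIntegrable
    rw [huIcc]
    exact hψ_cont.mono hsub
  have hftc : (∫ s in t₁..t₀, ⟪n₀, v s⟫) = ⟪n₀, r t₀⟫ - ⟪n₀, r t₁⟫ := by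
    apply intervalIntegral.integral_eq_sub_of_hasDerivAt
    · intro x hx
      rw [huIcc] at hx
      exact hg_deriv x (hsub hx)
    · exact hψ_ii
  have hpos : 0 < ∫ s in t₁..t₀, ⟪n₀, v s⟫ :=
    intervalIntegral.intervalIntegral_pos_of_pos_on hψ_ii hψ_pos ht₁lt
  have := h_glb t₁ ht₁mem
  rw [hftc] at hpos
  linarith
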